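/- For all ν > 0, γ₀ > 0, γ₁ ∈ (0,1), γ₂ > 0, and 0 < t ≤ T with T = ν⁻¹γ₀²γ₁², the unique positive zero ỹ(t) = √( ((4νt+γ₀²γ₁²)·γ₀²γ₁²/(4νt)) · ln( (4νt+γ₀²γ₁²)^{3/2}/(γ₀³γ₁³) ) ) of h₁(t,·) satisfies √(3/2)·γ₀γ₁ ≤ ỹ(t) ≤ 2·γ₀γ₁. -/

import Mathlib

open MeasureTheory Real Filter Set

noncomputable section

/-- The function `h₁(t,y) = γ₂·γ₁³·(4νt+γ₀²γ₁²)^{−3/2}·exp(−y²/(4νt+γ₀²γ₁²))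
  − γ₂·γ₀^{−3}·exp(−y²/(γ₀²γ₁²))` from the proof of Proposition 2.4. -/
def h1fun (ν γ₀ γ₁ γ₂ : ℝ) (t y : ℝ) : ℝ :=
  γ₂ * γ₁^3 / (Real.sqrt (4*ν*t + γ₀^2*γ₁^2))^3 * Real.exp (-y^2 / (4*ν*t + γ₀^2*γ₁^2))
    - γ₂ / γ₀^3 * Real.exp (-y^2 / (γ₀^2*γ₁^2))

/-- The unique positive zero `ỹ(t)` of `h₁(t,·)` (for `t > 0`). -/
def ytil (ν γ₀ γ₁ : ℝ) (t : ℝ) : ℝ :=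
  Real.sqrt ((4*ν*t + γ₀^2*γ₁^2) * γ₀^2 * γ₁^2 / (4*ν*t)
    * Real.log ((Real.sqrt (4*ν*t + γ₀^2*γ₁^2))^3 / (γ₀^3 * γ₁^3)))

/-! With `v = 1 + 4νt/(γ₀γ₁)²`, the bound `t ≤ T` means `1 < v ≤ 5`, and
`ỹ(t)² = (3/2)(γ₀γ₁)² · v log v / (v - 1)`. So the claim reduces to
`1 ≤ v log v / (v - 1) ≤ 8/3` on `(1, 5]`: the lower bound is `log v ≥ 1 - 1/v`, the upper one
follows from `log v ≤ v - 1` for small `v` and from `log v ≤ v / e` for large `v`. -/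

namespace Real

lemma log_le_div_exp_one {x : ℝ} (hx : 0 < x) : log x ≤ x / exp 1 := by
  have h := log_le_sub_one_of_pos (div_pos hx (exp_pos 1))
  rw [log_div hx.ne' (exp_ne_zero 1), log_exp] at h
  linarith

lemma mul_log_le_eight_thirds_mul_sub_one {v : ℝ} (h1 : 1 ≤ v) (h5 : v ≤ 5) :
    v * log v ≤ 8 / 3 * (v - 1) := by
  have hv : 0 < v := by linarith
  rcases le_or_gt v (8 / 3) with hv8 | hv8
  · nlinarith [log_le_sub_one_of_pos hv, log_nonneg h1]
  · have he : 2.7 < exp 1 := lt_trans (by norm_num) exp_one_gt_d9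
    calc v * log v ≤ v * (v / exp 1) := by gcongr; exact log_le_div_exp_one hv
      _ ≤ 8 / 3 * (v - 1) := by
        rw [mul_div_assoc', div_le_iff₀ (exp_pos 1)]
        nlinarith [mul_nonneg (by linarith : (0 : ℝ) ≤ v - 8 / 3) (by linarith : (0 : ℝ) ≤ 5 - v)]

lemma mul_log_div_sub_one_mem_Icc {v : ℝ} (h1 : 1 < v) (h5 : v ≤ 5) :
    v * log v / (v - 1) ∈ Icc 1 (8 / 3) := by
  have hv : 0 < v - 1 := by linarith
  have hlow : v - 1 ≤ v * log v := by
    have := one_sub_inv_le_log_of_pos (by linarith : 0 < v)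
    rwa [← mul_le_mul_iff_of_pos_left (by linarith : 0 < v), mul_sub, mul_one,
      mul_inv_cancel₀ (by linarith)] at this
  constructor
  · rwa [le_div_iff₀ hv, one_mul]
  · rw [div_le_iff₀ hv]
    exact mul_log_le_eight_thirds_mul_sub_one h1.le h5

end Real

lemma ytil_eq_mul_sqrt {ν γ₀ γ₁ t v : ℝ} (hγ₀ : 0 < γ₀) (hγ₁ : 0 < γ₁) (hνt : 0 < ν * t)
    (hv : v = 1 + 4 * ν * t / (γ₀ * γ₁) ^ 2) :
    ytil ν γ₀ γ₁ t = γ₀ * γ₁ * √(3 / 2 * (v * log v / (v - 1))) := by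
  have hv1 : v - 1 = 4 * ν * t / (γ₀ * γ₁) ^ 2 := by rw [hv]; ring
  have hsum : 4 * ν * t + γ₀ ^ 2 * γ₁ ^ 2 = (γ₀ * γ₁) ^ 2 * v := by
    rw [hv]; field_simp; ring
  have hv0 : 0 < v := by
    have : 0 < 4 * ν * t / (γ₀ * γ₁) ^ 2 := div_pos (by linarith) (by positivity)
    linarith
  have hlog : log (√(4 * ν * t + γ₀ ^ 2 * γ₁ ^ 2) ^ 3 / (γ₀ ^ 3 * γ₁ ^ 3)) = 3 / 2 * log v := by
    rw [hsum, sqrt_mul (by positivity), sqrt_sq (by positivity)]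
    rw [show (γ₀ * γ₁ * √v) ^ 3 / (γ₀ ^ 3 * γ₁ ^ 3) = √v ^ 3 by field_simp, log_pow,
      log_sqrt hv0.le]
    push_cast; ring
  have harg : (4 * ν * t + γ₀ ^ 2 * γ₁ ^ 2) * γ₀ ^ 2 * γ₁ ^ 2 / (4 * ν * t) * (3 / 2 * log v)
      = (γ₀ * γ₁) ^ 2 * (3 / 2 * (v * log v / (v - 1))) := by
    have : 4 * ν * t ≠ 0 := by linarith
    rw [hsum, hv1]
    field_simp
  rw [ytil, hlog, harg, sqrt_mul (by positivity), sqrt_sq (by positivity)]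

theorem ytil_bounds_general (ν γ₀ γ₁ t : ℝ) (hν : 0 < ν) (hγ₀ : 0 < γ₀)
    (hγ₁ : γ₁ ∈ Set.Ioo (0:ℝ) 1)
    (ht : 0 < t) (htT : t ≤ ν⁻¹ * γ₀^2 * γ₁^2) :
    Real.sqrt (3/2) * γ₀ * γ₁ ≤ ytil ν γ₀ γ₁ t ∧ ytil ν γ₀ γ₁ t ≤ 2 * γ₀ * γ₁ := by
  have hγ₁0 : 0 < γ₁ := hγ₁.1
  set v := 1 + 4 * ν * t / (γ₀ * γ₁) ^ 2 with hv
  have hv1 : 1 < v := by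
    have : 0 < 4 * ν * t / (γ₀ * γ₁) ^ 2 := by positivity
    linarith
  have hv5 : v ≤ 5 := by
    have : ν * t ≤ (γ₀ * γ₁) ^ 2 := by
      calc ν * t ≤ ν * (ν⁻¹ * γ₀ ^ 2 * γ₁ ^ 2) := by gcongr
        _ = (γ₀ * γ₁) ^ 2 := by field_simp
    have : 4 * ν * t / (γ₀ * γ₁) ^ 2 ≤ 4 := by
      rw [div_le_iff₀ (by positivity)]; linarith
    linarith
  obtain ⟨hlow, hhigh⟩ := mul_log_div_sub_one_mem_Icc hv1 hv5
  rw [ytil_eq_mul_sqrt hγ₀ hγ₁0 (by positivity) hv]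
  constructor
  · calc √(3 / 2) * γ₀ * γ₁ = γ₀ * γ₁ * √(3 / 2) := by ring
      _ ≤ γ₀ * γ₁ * √(3 / 2 * (v * log v / (v - 1))) := by gcongr; linarith
  · calc γ₀ * γ₁ * √(3 / 2 * (v * log v / (v - 1))) ≤ γ₀ * γ₁ * √(2 ^ 2) := by gcongr; linarith
      _ = 2 * γ₀ * γ₁ := by rw [sqrt_sq zero_le_two]; ring

/-- two-sided bound on the zero `ỹ(t)` of `h₁`, proof of
Proposition 2.4. For `0 < t ≤ T = ν⁻¹γ₀²γ₁²`, one has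
`√(3/2)·γ₀γ₁ ≤ ỹ(t) ≤ 2·γ₀γ₁`. -/
theorem ytil_bounds (ν γ₀ γ₁ γ₂ t : ℝ) (hν : 0 < ν) (hγ₀ : 0 < γ₀)
    (hγ₁ : γ₁ ∈ Set.Ioo (0:ℝ) 1) (hγ₂ : 0 < γ₂)
    (ht : 0 < t) (htT : t ≤ ν⁻¹ * γ₀^2 * γ₁^2) :
    Real.sqrt (3/2) * γ₀ * γ₁ ≤ ytil ν γ₀ γ₁ t ∧ ytil ν γ₀ γ₁ t ≤ 2 * γ₀ * γ₁ :=
  ytil_bounds_general ν γ₀ γ₁ t hν hγ₀ hγ₁ ht htT
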